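/- Let A, B be n×n positive definite complex matrices, let v ∈ (0,1), and let m, m', M, M' be positive reals satisfying either m'·I ≤ A ≤ m·I < M·I ≤ B ≤ M'·I or m'·I ≤ B ≤ m·I < M·I ≤ A ≤ M'·I in the Loewner order. Then A∇B ≤ 2R(A∇B − A#B) − r₁(A∇B + A#B − 2H_{1/4}(A, B)) + K(h^{1/4}, 2)^{−r̂₁} · H_v(A, B) in the Loewner order, where h = M/m, r = min{v, 1 − v}, R = max{v, 1 − v}, r₁ = min{2r, 1 − 2r} and r̂₁ = min{2r₁, 1 − 2r₁}. -/

import Mathlib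

open Matrix
open scoped ComplexOrder

/-- Real power of a matrix, defined for Hermitian matrices via the spectral
decomposition (functional calculus); junk value otherwise. -/
noncomputable def mrpow {n : ℕ} (A : Matrix (Fin n) (Fin n) ℂ) (t : ℝ) :
    Matrix (Fin n) (Fin n) ℂ :=
  if h : A.IsHermitian then
    (h.eigenvectorUnitary : Matrix (Fin n) (Fin n) ℂ)
      * Matrix.diagonal (fun i => ((h.eigenvalues i ^ t : ℝ) : ℂ))
      * star (h.eigenvectorUnitary : Matrix (Fin n) (Fin n) ℂ)
  else A

/-- Weighted arithmetic mean `A ∇_v B = (1 - v) A + v B`. -/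
noncomputable def anabla {n : ℕ} (v : ℝ) (A B : Matrix (Fin n) (Fin n) ℂ) :
    Matrix (Fin n) (Fin n) ℂ :=
  ((1 - v : ℝ) : ℂ) • A + ((v : ℝ) : ℂ) • B

/-- Weighted geometric mean `A #_v B = A^{1/2} (A^{-1/2} B A^{-1/2})^v A^{1/2}`. -/
noncomputable def asharp {n : ℕ} (v : ℝ) (A B : Matrix (Fin n) (Fin n) ℂ) :
    Matrix (Fin n) (Fin n) ℂ :=
  mrpow A (1 / 2) * mrpow (mrpow A (-(1 / 2)) * B * mrpow A (-(1 / 2))) v * mrpow A (1 / 2)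

/-- Heinz operator mean `H_v(A, B) = (A #_v B + A #_{1-v} B) / 2`. -/
noncomputable def heinz {n : ℕ} (v : ℝ) (A B : Matrix (Fin n) (Fin n) ℂ) :
    Matrix (Fin n) (Fin n) ℂ :=
  ((1 / 2 : ℝ) : ℂ) • (asharp v A B + asharp (1 - v) A B)

/-- The Loewner order: `loewner X Y` iff `Y - X` is positive semidefinite. -/
def loewner {n : ℕ} (X Y : Matrix (Fin n) (Fin n) ℂ) : Prop := (Y - X).PosSemidef

/-- The Kantorovich constant `K(t, 2) = (t + 1)^2 / (4 t)`. -/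
noncomputable def Kant (t : ℝ) : ℝ := (t + 1) ^ 2 / (4 * t)

/-!
Put `C = A^{-1/2} B A^{-1/2} = V diag(λ) V*` and `W = A^{1/2} V`. Then `A = W W*`,
`B = W diag(λ) W*` and `A #_t B = W diag(λ^t) W*`, so every matrix in the inequality has
the form `W diag(f(λ)) W*` and the Loewner inequality reduces to a scalar inequality at each
eigenvalue `λ` of `C`. The order hypotheses give `h A ≤ B` or `h B ≤ A`, i.e. `λ ≥ h` or
`λ ≤ 1/h`, and hence `K(h^{1/4}, 2) ≤ K(t, 2)` for `t = λ^{1/4}`. The scalar inequality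
follows from `H_v(1, λ) ≥ λ^{1/2}`, the tangent bound `K^{-a} ≥ 1 - a (K - 1)`, and the fact
that what remains is `(t - 1)^2 / 2` times a nonnegative combination of `t^2 + 1` and `t`.
-/

lemma Kant_le_Kant {a b : ℝ} (ha : 1 ≤ a) (hab : a ≤ b) : Kant a ≤ Kant b := by
  unfold Kant
  rw [div_le_div_iff₀ (by linarith) (by linarith)]
  have hab1 : 1 ≤ a * b := one_le_mul_of_one_le_of_one_le ha (ha.trans hab)
  nlinarith [mul_nonneg (sub_nonneg.2 hab) (sub_nonneg.2 hab1)]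

lemma Kant_inv (t : ℝ) : Kant t⁻¹ = Kant t := by
  rcases eq_or_ne t 0 with rfl | ht
  · simp
  · unfold Kant
    field_simp
    ring

lemma Kant_rpow_le_Kant_rpow {h l p : ℝ} (hh : 1 ≤ h) (hl : 0 < l) (hp : 0 ≤ p)
    (hl' : h ≤ l ∨ l ≤ h⁻¹) : Kant (h ^ p) ≤ Kant (l ^ p) := by
  have hhp : 1 ≤ h ^ p := Real.one_le_rpow hh hp
  rcases hl' with hle | hle
  · exact Kant_le_Kant hhp (Real.rpow_le_rpow (by linarith) hle hp)
  · rw [← Kant_inv (l ^ p), ← Real.inv_rpow hl.le]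
    have hle' : h ≤ l⁻¹ := (le_inv_comm₀ hl (by linarith)).1 hle
    exact Kant_le_Kant hhp (Real.rpow_le_rpow (by linarith) hle' hp)

lemma one_sub_mul_le_rpow_neg {K a : ℝ} (hK : 0 < K) (ha : 0 ≤ a) :
    1 - a * (K - 1) ≤ K ^ (-a) := by
  rw [Real.rpow_def_of_pos hK]
  nlinarith [Real.add_one_le_exp (Real.log K * -a), Real.log_le_sub_one_of_pos hK]

lemma arith_le_refined_of_pow {t K r r1 rh1 : ℝ} (ht : 0 < t) (hK : 0 < K) (hKt : K ≤ Kant t)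
    (hr1 : r1 ≤ 1 - 2 * r) (hrh1 : rh1 ≤ 2 * r1) (hrh0 : 0 ≤ rh1) :
    (1 + t ^ 4) / 2 ≤ 2 * (1 - r) * ((1 + t ^ 4) / 2 - t ^ 2)
      - r1 * ((1 + t ^ 4) / 2 + t ^ 2 - (t + t ^ 3)) + K ^ (-rh1) * t ^ 2 := by
  have hKt' : (K - 1) * t ^ 2 ≤ t * (t - 1) ^ 2 / 4 := by
    calc (K - 1) * t ^ 2 ≤ (Kant t - 1) * t ^ 2 := by gcongr
      _ = t * (t - 1) ^ 2 / 4 := by unfold Kant; field_simp; ring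
  have hpow := mul_le_mul_of_nonneg_right (one_sub_mul_le_rpow_neg hK hrh0) (sq_nonneg t)
  have h1 : 0 ≤ (t - 1) ^ 2 * ((1 - 2 * r - r1) * (t ^ 2 + 1)) := by
    have : 0 ≤ 1 - 2 * r - r1 := by linarith
    positivity
  have h2 : 0 ≤ (t - 1) ^ 2 * ((2 * (1 - 2 * r) - rh1 / 2) * t) := by
    have : 0 ≤ 2 * (1 - 2 * r) - rh1 / 2 := by linarith
    positivity
  nlinarith [mul_le_mul_of_nonneg_left hKt' hrh0]

lemma rpow_half_le_heinz {l : ℝ} (hl : 0 < l) (v : ℝ) :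
    l ^ (1 / 2 : ℝ) ≤ (l ^ v + l ^ (1 - v)) / 2 := by
  have hprod : l ^ v * l ^ (1 - v) = l ^ (1 / 2 : ℝ) * l ^ (1 / 2 : ℝ) := by
    rw [← Real.rpow_add hl, ← Real.rpow_add hl]; norm_num
  nlinarith [sq_nonneg (l ^ v - l ^ (1 - v)), Real.rpow_pos_of_pos hl v,
    Real.rpow_pos_of_pos hl (1 - v), Real.rpow_pos_of_pos hl (1 / 2 : ℝ)]

lemma arith_le_refined_heinz {l K v r R r1 rh1 : ℝ} (hl : 0 < l) (hK : 0 < K)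
    (hKl : K ≤ Kant (l ^ (1 / 4 : ℝ))) (hR : R = 1 - r)
    (hr1 : r1 ≤ 1 - 2 * r) (hrh1 : rh1 ≤ 2 * r1) (hrh0 : 0 ≤ rh1) :
    (1 + l) / 2 ≤ 2 * R * ((1 + l) / 2 - l ^ (1 / 2 : ℝ))
      - r1 * ((1 + l) / 2 + l ^ (1 / 2 : ℝ) - (l ^ (1 / 4 : ℝ) + l ^ (3 / 4 : ℝ)))
      + K ^ (-rh1) * ((l ^ v + l ^ (1 - v)) / 2) := by
  set t := l ^ (1 / 4 : ℝ) with ht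
  have hpow : ∀ k : ℕ, l ^ ((k : ℝ) / 4) = t ^ k := fun k => by
    rw [ht, ← Real.rpow_natCast, ← Real.rpow_mul hl.le]; ring_nf
  have h4 : l = t ^ 4 := by rw [← hpow 4]; norm_num
  have h2 : l ^ (1 / 2 : ℝ) = t ^ 2 := by rw [← hpow 2]; norm_num
  have h3 : l ^ (3 / 4 : ℝ) = t ^ 3 := by rw [← hpow 3]; norm_num
  have key := arith_le_refined_of_pow (t := t) (Real.rpow_pos_of_pos hl _) hK hKl hr1 hrh1 hrh0
  have hH := mul_le_mul_of_nonneg_left (rpow_half_le_heinz hl v) (Real.rpow_nonneg hK.le (-rh1))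
  rw [← h4, ← h2, ← h3] at key
  rw [hR]
  linarith

namespace Matrix

variable {ι : Type*} [Fintype ι] [DecidableEq ι]

def IsCongrDiag (W : Matrix ι ι ℂ) (f : ι → ℝ) (X : Matrix ι ι ℂ) : Prop :=
  X = W * diagonal (fun i => (f i : ℂ)) * Wᴴ

namespace IsCongrDiag

variable {W X Y : Matrix ι ι ℂ} {f g : ι → ℝ}

lemma add (hX : IsCongrDiag W f X) (hY : IsCongrDiag W g Y) :
    IsCongrDiag W (f + g) (X + Y) := by
  rw [IsCongrDiag, hX, hY, ← Matrix.add_mul, ← Matrix.mul_add, diagonal_add]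
  simp only [Pi.add_apply, Complex.ofReal_add]

lemma sub (hX : IsCongrDiag W f X) (hY : IsCongrDiag W g Y) :
    IsCongrDiag W (f - g) (X - Y) := by
  rw [IsCongrDiag, hX, hY, ← Matrix.sub_mul, ← Matrix.mul_sub, diagonal_sub]
  simp only [Pi.sub_apply, Complex.ofReal_sub]

lemma smul (hX : IsCongrDiag W f X) (c : ℝ) : IsCongrDiag W (c • f) ((c : ℂ) • X) := by
  have hd : (fun i => ((c • f) i : ℂ)) = (c : ℂ) • fun i => (f i : ℂ) := by ext; simp
  rw [IsCongrDiag, hX, hd, diagonal_smul, Matrix.mul_smul, Matrix.smul_mul]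

lemma mul (hW : Wᴴ * W = 1) (hX : IsCongrDiag W f X) (hY : IsCongrDiag W g Y) :
    IsCongrDiag W (f * g) (X * Y) := by
  have hd : (fun i => ((f * g) i : ℂ)) = fun i => (f i : ℂ) * g i := by ext; simp
  rw [IsCongrDiag, hX, hY, hd, ← diagonal_mul_diagonal]
  simp only [Matrix.mul_assoc]
  rw [← Matrix.mul_assoc Wᴴ W, hW, Matrix.one_mul]

lemma one (hW : W * Wᴴ = 1) : IsCongrDiag W 1 1 := by
  simp [IsCongrDiag, hW]

lemma conj (hX : IsCongrDiag W f X) (P : Matrix ι ι ℂ) :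
    IsCongrDiag (P * W) f (P * X * Pᴴ) := by
  rw [IsCongrDiag, hX, conjTranspose_mul]
  simp only [Matrix.mul_assoc]

lemma conjTranspose_eq (hX : IsCongrDiag W f X) : Xᴴ = X := by
  have hd : star (fun i => (f i : ℂ)) = fun i => (f i : ℂ) := by ext; simp
  rw [hX]
  simp only [conjTranspose_mul, conjTranspose_conjTranspose, diagonal_conjTranspose, hd,
    Matrix.mul_assoc]

lemma posSemidef_sub (hX : IsCongrDiag W f X) (hY : IsCongrDiag W g Y) (hfg : f ≤ g) :
    (Y - X).PosSemidef := by
  rw [hY.sub hX]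
  have hD : (diagonal fun i => ((g - f) i : ℂ)).PosSemidef :=
    posSemidef_diagonal_iff.2 fun i => Complex.zero_le_real.2 (sub_nonneg.2 (hfg i))
  exact hD.mul_mul_conjTranspose_same W

lemma le_of_posSemidef_sub {V : Matrix ι ι ℂ} (hVW : V * W = 1) (hX : IsCongrDiag W f X)
    (hY : IsCongrDiag W g Y) (h : (Y - X).PosSemidef) : f ≤ g := by
  intro i
  have hd := h.mul_mul_conjTranspose_same V
  rw [hY.sub hX, ← Matrix.mul_assoc, ← Matrix.mul_assoc, hVW, Matrix.one_mul, Matrix.mul_assoc,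
    ← conjTranspose_mul, hVW, conjTranspose_one, Matrix.mul_one] at hd
  exact sub_nonneg.1 (Complex.zero_le_real.1 (posSemidef_diagonal_iff.1 hd i))

end IsCongrDiag

lemma IsHermitian.isCongrDiag {n : ℕ} {A : Matrix (Fin n) (Fin n) ℂ} (hA : A.IsHermitian) :
    IsCongrDiag (hA.eigenvectorUnitary : Matrix (Fin n) (Fin n) ℂ) hA.eigenvalues A := by
  have h := hA.spectral_theorem
  rwa [Unitary.conjStarAlgAut_apply] at h

end Matrix

section mrpow

variable {n : ℕ} {A : Matrix (Fin n) (Fin n) ℂ}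

lemma isCongrDiag_mrpow (hA : A.IsHermitian) (t : ℝ) :
    IsCongrDiag (hA.eigenvectorUnitary : Matrix (Fin n) (Fin n) ℂ)
      (fun i => hA.eigenvalues i ^ t) (mrpow A t) := by
  rw [IsCongrDiag, mrpow, dif_pos hA]
  rfl

lemma conjTranspose_mrpow (hA : A.IsHermitian) (t : ℝ) : (mrpow A t)ᴴ = mrpow A t :=
  (isCongrDiag_mrpow hA t).conjTranspose_eq

lemma mrpow_mul_mrpow (hA : A.PosDef) (s t : ℝ) :
    mrpow A s * mrpow A t = mrpow A (s + t) := by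
  rw [((isCongrDiag_mrpow hA.1 s).mul (Unitary.star_mul_self_of_mem (SetLike.coe_mem _))
    (isCongrDiag_mrpow hA.1 t)), isCongrDiag_mrpow hA.1 (s + t)]
  congr
  ext i
  simp [Real.rpow_add (hA.eigenvalues_pos i)]

lemma mrpow_zero (hA : A.IsHermitian) : mrpow A 0 = 1 := by
  rw [isCongrDiag_mrpow hA 0]
  simp only [Real.rpow_zero, Complex.ofReal_one]
  rw [diagonal_one, Matrix.mul_one]
  exact Unitary.mul_star_self_of_mem (SetLike.coe_mem _)

lemma mrpow_one (hA : A.IsHermitian) : mrpow A 1 = A := by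
  rw [isCongrDiag_mrpow hA 1]
  simp only [Real.rpow_one]
  exact hA.isCongrDiag.symm

end mrpow

lemma loewner_div_smul {n : ℕ} {X Y : Matrix (Fin n) (Fin n) ℂ} {a b : ℝ} (ha : 0 < a)
    (hb : 0 ≤ b) (hX : loewner X ((a : ℂ) • 1)) (hY : loewner ((b : ℂ) • 1) Y) :
    loewner (((b / a : ℝ) : ℂ) • X) Y := by
  have hba : (0 : ℂ) ≤ ((b / a : ℝ) : ℂ) := Complex.zero_le_real.2 (div_nonneg hb ha.le)
  have hsplit : Y - ((b / a : ℝ) : ℂ) • X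
      = (Y - (b : ℂ) • 1) + ((b / a : ℝ) : ℂ) • ((a : ℂ) • 1 - X) := by
    rw [smul_sub, smul_smul, ← Complex.ofReal_mul, div_mul_cancel₀ b ha.ne']
    abel
  unfold loewner at *
  rw [hsplit]
  exact hY.add (hX.smul hba)

lemma exists_isCongrDiag_asharp {n : ℕ} {A B : Matrix (Fin n) (Fin n) ℂ} (hA : A.PosDef)
    (hB : B.PosDef) :
    ∃ (W V : Matrix (Fin n) (Fin n) ℂ) (l : Fin n → ℝ), V * W = 1 ∧ (∀ i, 0 < l i) ∧
      IsCongrDiag W 1 A ∧ IsCongrDiag W l B ∧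
      ∀ t, IsCongrDiag W (fun i => l i ^ t) (asharp t A B) := by
  set T := mrpow A (1 / 2)
  set T' := mrpow A (-(1 / 2))
  have hTT' : T * T' = 1 := by rw [mrpow_mul_mrpow hA]; norm_num [mrpow_zero hA.1]
  have hT'T : T' * T = 1 := by rw [mrpow_mul_mrpow hA]; norm_num [mrpow_zero hA.1]
  have hTT : T * T = A := by rw [mrpow_mul_mrpow hA]; norm_num [mrpow_one hA.1]
  have hTH : Tᴴ = T := conjTranspose_mrpow hA.1 _
  have hC : (T' * B * T').PosDef := by
    have hinj : Function.Injective T'.mulVec := fun x y hxy => by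
      simpa [mulVec_mulVec, hTT'] using congrArg (T *ᵥ ·) hxy
    have h := hB.conjTranspose_mul_mul_same hinj
    rwa [conjTranspose_mrpow hA.1] at h
  set V : Matrix (Fin n) (Fin n) ℂ := (hC.1.eigenvectorUnitary : Matrix (Fin n) (Fin n) ℂ)
  have hVV : Vᴴ * V = 1 := Unitary.star_mul_self_of_mem (SetLike.coe_mem _)
  have hVV' : V * Vᴴ = 1 := Unitary.mul_star_self_of_mem (SetLike.coe_mem _)
  refine ⟨T * V, Vᴴ * T', hC.1.eigenvalues, ?_, hC.eigenvalues_pos, ?_, ?_, fun t => ?_⟩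
  · rw [Matrix.mul_assoc, ← Matrix.mul_assoc T', hT'T, Matrix.one_mul, hVV]
  · have h := (IsCongrDiag.one hVV').conj T
    rwa [Matrix.mul_one, hTH, hTT] at h
  · have hB' : T * (T' * B * T') * Tᴴ = B := by
      rw [hTH, ← Matrix.mul_assoc, ← Matrix.mul_assoc, hTT', Matrix.one_mul, Matrix.mul_assoc,
        hT'T, Matrix.mul_one]
    have h := hC.1.isCongrDiag.conj T
    rwa [hB'] at h
  · have h := (isCongrDiag_mrpow hC.1 t).conj T
    rwa [hTH] at h

lemma le_or_le_inv_of_loewner {n : ℕ} {A B W V : Matrix (Fin n) (Fin n) ℂ} {l : Fin n → ℝ}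
    {m M : ℝ} (hm : 0 < m) (hmM : m < M) (hVW : V * W = 1) (hWA : IsCongrDiag W 1 A)
    (hWB : IsCongrDiag W l B)
    (hAB : loewner A ((m : ℂ) • 1) ∧ loewner ((M : ℂ) • 1) B ∨
      loewner B ((m : ℂ) • 1) ∧ loewner ((M : ℂ) • 1) A) (i : Fin n) :
    M / m ≤ l i ∨ l i ≤ (M / m)⁻¹ := by
  rcases hAB with ⟨hAm, hMB⟩ | ⟨hBm, hMA⟩
  · left
    have hle := (hWA.smul _).le_of_posSemidef_sub hVW hWB
      (loewner_div_smul hm (hm.trans hmM).le hAm hMB)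
    simpa using hle i
  · right
    have hle := (hWB.smul _).le_of_posSemidef_sub hVW hWA
      (loewner_div_smul hm (hm.trans hmM).le hBm hMA)
    have hli := hle i
    simp only [Pi.smul_apply, smul_eq_mul, Pi.one_apply] at hli
    rw [← one_div, le_div_iff₀ (div_pos (hm.trans hmM) hm)]
    linarith

lemma min_one_sub_bounds {a : ℝ} (h0 : 0 ≤ a) (h1 : a ≤ 1) :
    0 ≤ min a (1 - a) ∧ 2 * min a (1 - a) ≤ 1 :=
  ⟨le_min h0 (by linarith), by linarith [min_le_left a (1 - a), min_le_right a (1 - a)]⟩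

theorem stmt_15_general {n : ℕ} (A B : Matrix (Fin n) (Fin n) ℂ) (m m' M M' v h r R r1 rh1 : ℝ)
    (hA : A.PosDef) (hB : B.PosDef)
    (hm : 0 < m) (hmM : m < M)
    (hcond : (loewner ((m' : ℂ) • 1) A ∧ loewner A ((m : ℂ) • 1) ∧
        loewner ((M : ℂ) • 1) B ∧ loewner B ((M' : ℂ) • 1)) ∨
      (loewner ((m' : ℂ) • 1) B ∧ loewner B ((m : ℂ) • 1) ∧
        loewner ((M : ℂ) • 1) A ∧ loewner A ((M' : ℂ) • 1)))
    (hh : h = M / m) (hr : r = min v (1 - v))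
    (hr1 : r1 = min (2 * r) (1 - 2 * r)) (hrh1 : rh1 = min (2 * r1) (1 - 2 * r1)) (hR : R = max v (1 - v))
    (hv0 : 0 < v) (hv : v < 1) :
    loewner (anabla (1 / 2) A B)
      (((2 * R : ℝ) : ℂ) • (anabla (1 / 2) A B - asharp (1 / 2) A B)
        - ((r1 : ℝ) : ℂ) • (anabla (1 / 2) A B + asharp (1 / 2) A B - (2 : ℂ) • heinz (1 / 4) A B)
        + ((Kant (h ^ ((1 : ℝ) / 4)) ^ (-rh1) : ℝ) : ℂ) • heinz v A B) := by
  obtain ⟨W, V, l, hVW, hl, hWA, hWB, hWsharp⟩ := exists_isCongrDiag_asharp hA hB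
  subst hh
  have hl' := le_or_le_inv_of_loewner hm hmM hVW hWA hWB
    (hcond.imp (fun h => ⟨h.2.1, h.2.2.1⟩) fun h => ⟨h.2.1, h.2.2.1⟩)
  obtain ⟨hr0, hr2⟩ := hr ▸ min_one_sub_bounds hv0.le hv.le
  obtain ⟨hr10, hr12⟩ := hr1 ▸ min_one_sub_bounds (by linarith) (by linarith)
  have hrh0 : 0 ≤ rh1 := (hrh1 ▸ min_one_sub_bounds (by linarith) (by linarith)).1
  have hRr : R = 1 - r := by rw [hR, hr]; linarith [min_add_max v (1 - v)]
  have hN : IsCongrDiag W ((1 - 1 / 2 : ℝ) • 1 + (1 / 2 : ℝ) • l) (anabla (1 / 2) A B) :=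
    (hWA.smul _).add (hWB.smul _)
  have hH : ∀ w, IsCongrDiag W ((1 / 2 : ℝ) • ((fun i => l i ^ w) + fun i => l i ^ (1 - w)))
      (heinz w A B) := fun w => ((hWsharp w).add (hWsharp (1 - w))).smul _
  rw [show (2 : ℂ) = ((2 : ℝ) : ℂ) by norm_num]
  refine hN.posSemidef_sub ((((hN.sub (hWsharp _)).smul _).sub
    (((hN.add (hWsharp _)).sub ((hH _).smul 2)).smul _)).add ((hH v).smul _)) fun i => ?_
  have hM : 0 < M := hm.trans hmM
  have key := arith_le_refined_heinz (v := v) (hl i) (by unfold Kant; positivity)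
    (Kant_rpow_le_Kant_rpow ((one_le_div hm).2 hmM.le) (hl i) (by norm_num) (hl' i)) hRr
    (hr1 ▸ min_le_right _ _) (hrh1 ▸ min_le_left _ _) hrh0
  simp only [Pi.add_apply, Pi.sub_apply, Pi.smul_apply, smul_eq_mul, Pi.one_apply]
  rw [show (1 : ℝ) - 1 / 4 = 3 / 4 by norm_num]
  linarith

theorem stmt_15 {n : ℕ} (A B : Matrix (Fin n) (Fin n) ℂ) (m m' M M' v h r R r1 rh1 : ℝ)
    (hA : A.PosDef) (hB : B.PosDef)
    (hm' : 0 < m') (hm : 0 < m) (hM : 0 < M) (hM' : 0 < M') (hmM : m < M)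
    (hcond : (loewner ((m' : ℂ) • 1) A ∧ loewner A ((m : ℂ) • 1) ∧
        loewner ((M : ℂ) • 1) B ∧ loewner B ((M' : ℂ) • 1)) ∨
      (loewner ((m' : ℂ) • 1) B ∧ loewner B ((m : ℂ) • 1) ∧
        loewner ((M : ℂ) • 1) A ∧ loewner A ((M' : ℂ) • 1)))
    (hh : h = M / m) (hr : r = min v (1 - v))
    (hr1 : r1 = min (2 * r) (1 - 2 * r)) (hrh1 : rh1 = min (2 * r1) (1 - 2 * r1)) (hR : R = max v (1 - v))
    (hv0 : 0 < v) (hv : v < 1) :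
    loewner (anabla (1 / 2) A B)
      (((2 * R : ℝ) : ℂ) • (anabla (1 / 2) A B - asharp (1 / 2) A B)
        - ((r1 : ℝ) : ℂ) • (anabla (1 / 2) A B + asharp (1 / 2) A B - (2 : ℂ) • heinz (1 / 4) A B)
        + ((Kant (h ^ ((1 : ℝ) / 4)) ^ (-rh1) : ℝ) : ℂ) • heinz v A B) :=
  stmt_15_general A B m m' M M' v h r R r1 rh1 hA hB hm hmM hcond hh hr hr1 hrh1 hR hv0 hv
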